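/- Let A¹ = (a_{ij}) be a symmetric real 2×2 matrix and take A² = 0 (the case of a surface M² contained in ℝ³ ⊂ ℝ⁴, whose spinor bundle S(ℝ³) is the restriction of S±(ℝ⁴)). In the octonions 𝕆, for (t₁, t₂) ∈ ℝ² define E₁ = 𝐞 + (t₁/2)·𝐢·(a₁₂𝐣 + a₁₁𝐤) + (t₂/2)·𝐢·(−a₁₁𝐣 + a₁₂𝐤), E₂ = 𝐢𝐞 + (t₁/2)·𝐢·(a₂₂𝐣 + a₁₂𝐤) + (t₂/2)·𝐢·(−a₁₂𝐣 + a₂₂𝐤), F₁ = 𝟏, F₂ = 𝐢 (all products octonionic). Then the imaginary part of the octonion Ē₁·(E₂·(F̄₁·F₂)) vanishes for every (t₁, t₂) ∈ ℝ² if and only if trace A¹ = a₁₁ + a₂₂ = 0. (This is the pointwise statement that the total spaces of the eigenbundles V±ⱼ of the spinor bundle S(ℝ³) ≅ ℝ⁷ over a surface M² ⊂ ℝ³ are coassociative in ℝ⁷ if and only if M² is minimal in ℝ³.) -/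

import Mathlib

noncomputable section

/-- The octonions as pairs of quaternions, `𝕆 = ℍ × ℍ`. -/
abbrev Octo := Quaternion ℝ × Quaternion ℝ

/-- Cayley–Dickson multiplication `(a,b)·(c,d) = (ac − d̄b, da + bc̄)`. -/
def omul (x y : Octo) : Octo :=
  (x.1 * y.1 - star y.2 * x.2, y.2 * x.1 + x.2 * star y.1)

/-- Octonion conjugation `(a,b)‾ = (ā, −b)`. -/
def oconj (x : Octo) : Octo := (star x.1, -x.2)

/-- Imaginary part `Im x = (x − x̄)/2`. -/
def oim (x : Octo) : Octo := (2⁻¹ : ℝ) • (x - oconj x)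

def o1 : Octo := (1, 0)
def oI : Octo := (⟨0, 1, 0, 0⟩, 0)
def oJ : Octo := (⟨0, 0, 1, 0⟩, 0)
def oK : Octo := (⟨0, 0, 0, 1⟩, 0)
def oE : Octo := (0, 1)
def oIE : Octo := (0, ⟨0, 1, 0, 0⟩)

/-- `E₁ = 𝐞 + (t₁/2)𝐢(a₁₂𝐣 + a₁₁𝐤) + (t₂/2)𝐢(−a₁₁𝐣 + a₁₂𝐤)` (the case `A² = 0`
of a surface `M² ⊂ ℝ³ ⊂ ℝ⁴`). -/
def spinE1 (A1 : Matrix (Fin 2) (Fin 2) ℝ) (t1 t2 : ℝ) : Octo :=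
  oE + (t1 / 2) • omul oI (A1 0 1 • oJ + A1 0 0 • oK)
     + (t2 / 2) • omul oI ((-(A1 0 0)) • oJ + A1 0 1 • oK)

/-- `E₂ = 𝐢𝐞 + (t₁/2)𝐢(a₂₂𝐣 + a₁₂𝐤) + (t₂/2)𝐢(−a₁₂𝐣 + a₂₂𝐤)`. -/
def spinE2 (A1 : Matrix (Fin 2) (Fin 2) ℝ) (t1 t2 : ℝ) : Octo :=
  oIE + (t1 / 2) • omul oI (A1 1 1 • oJ + A1 0 1 • oK)
      + (t2 / 2) • omul oI ((-(A1 0 1)) • oJ + A1 1 1 • oK)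

/-!
Write `E₁ = (u, 1)` and `E₂ = (v, 𝐢)` with `u, v ∈ span(𝐣, 𝐤)`. Since `F̄₁F₂ = 𝐢`, the
Cayley–Dickson formula gives `Ē₁(E₂𝐢) = (ū v 𝐢 + 1, −(u + 𝐢 v))`, and expanding in coordinates
its imaginary part is `(tr A¹ / 2) · (a₁₂ (t₁² + t₂²)/2 · 𝐢 + t₁ · 𝐣𝐞 + t₂ · 𝐤𝐞)`. The second
factor is nonzero at `t = (1, 0)`, so the product is real for all `t` exactly when `tr A¹ = 0`.
-/

open Quaternion

namespace Quaternion

variable (a₁ a₂ a₃ a₄ b₁ b₂ b₃ b₄ r : ℝ)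

/- `ℍ[ℝ]` is a (non-reducible) def, so simp does not apply the `QuaternionAlgebra.*_mk` lemmas
to its elements; the coordinate formulas are restated at type `ℍ[ℝ]`, which the named arguments
force (a bare `⟨…⟩ * ⟨…⟩` would elaborate in `ℍ[ℝ,-1,0,-1]`). -/

@[simp] lemma real_mk_mul_mk :
    HMul.hMul (α := ℍ[ℝ]) (β := ℍ[ℝ]) ⟨a₁, a₂, a₃, a₄⟩ ⟨b₁, b₂, b₃, b₄⟩ =
      ⟨a₁ * b₁ - a₂ * b₂ - a₃ * b₃ - a₄ * b₄, a₁ * b₂ + a₂ * b₁ + a₃ * b₄ - a₄ * b₃,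
        a₁ * b₃ - a₂ * b₄ + a₃ * b₁ + a₄ * b₂, a₁ * b₄ + a₂ * b₃ - a₃ * b₂ + a₄ * b₁⟩ :=
  Quaternion.ext _ _ (re_mul _ _) (imI_mul _ _) (imJ_mul _ _) (imK_mul _ _)

@[simp] lemma real_mk_add_mk :
    HAdd.hAdd (α := ℍ[ℝ]) (β := ℍ[ℝ]) ⟨a₁, a₂, a₃, a₄⟩ ⟨b₁, b₂, b₃, b₄⟩ =
      ⟨a₁ + b₁, a₂ + b₂, a₃ + b₃, a₄ + b₄⟩ :=
  Quaternion.ext _ _ (re_add _ _) (imI_add _ _) (imJ_add _ _) (imK_add _ _)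

@[simp] lemma real_mk_sub_mk :
    HSub.hSub (α := ℍ[ℝ]) (β := ℍ[ℝ]) ⟨a₁, a₂, a₃, a₄⟩ ⟨b₁, b₂, b₃, b₄⟩ =
      ⟨a₁ - b₁, a₂ - b₂, a₃ - b₃, a₄ - b₄⟩ :=
  Quaternion.ext _ _ (re_sub _ _) (imI_sub _ _) (imJ_sub _ _) (imK_sub _ _)

@[simp] lemma real_neg_mk : Neg.neg (α := ℍ[ℝ]) ⟨a₁, a₂, a₃, a₄⟩ = ⟨-a₁, -a₂, -a₃, -a₄⟩ :=
  Quaternion.ext _ _ (re_neg _) (imI_neg _) (imJ_neg _) (imK_neg _)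

@[simp] lemma real_smul_mk :
    HSMul.hSMul (β := ℍ[ℝ]) r ⟨a₁, a₂, a₃, a₄⟩ = ⟨r * a₁, r * a₂, r * a₃, r * a₄⟩ :=
  Quaternion.ext _ _ (re_smul _ _) (imI_smul _ _) (imJ_smul _ _) (imK_smul _ _)

@[simp] lemma real_star_mk : star (R := ℍ[ℝ]) ⟨a₁, a₂, a₃, a₄⟩ = ⟨a₁, -a₂, -a₃, -a₄⟩ :=
  Quaternion.ext _ _ (re_star _) (imI_star _) (imJ_star _) (imK_star _)

@[simp] lemma real_zero_eq_mk : (0 : ℍ[ℝ]) = ⟨0, 0, 0, 0⟩ := rfl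

@[simp] lemma real_one_eq_mk : (1 : ℍ[ℝ]) = ⟨1, 0, 0, 0⟩ := rfl

end Quaternion

section SpinorFrame

variable (A : Matrix (Fin 2) (Fin 2) ℝ) (t1 t2 : ℝ)

lemma spinE1_eq :
    spinE1 A t1 t2 =
      ((⟨0, 0, -(t1 * A 0 0 + t2 * A 0 1) / 2, (t1 * A 0 1 - t2 * A 0 0) / 2⟩, 1) : Octo) := by
  refine Prod.ext ?_ ?_ <;> apply Quaternion.ext <;> simp [spinE1, omul, oE, oI, oJ, oK] <;> ring

lemma spinE2_eq :
    spinE2 A t1 t2 =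
      ((⟨0, 0, -(t1 * A 0 1 + t2 * A 1 1) / 2, (t1 * A 1 1 - t2 * A 0 1) / 2⟩, ⟨0, 1, 0, 0⟩) :
        Octo) := by
  refine Prod.ext ?_ ?_ <;> apply Quaternion.ext <;> simp [spinE2, omul, oIE, oI, oJ, oK] <;> ring

lemma oim_spin_fourfold_eq_trace_smul :
    oim (omul (oconj (spinE1 A t1 t2)) (omul (spinE2 A t1 t2) (omul (oconj o1) oI))) =
      ((A 0 0 + A 1 1) / 2) •
        ((⟨0, A 0 1 * (t1 ^ 2 + t2 ^ 2) / 2, 0, 0⟩, ⟨0, 0, t1, t2⟩) : Octo) := by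
  rw [spinE1_eq, spinE2_eq]
  refine Prod.ext ?_ ?_ <;> apply Quaternion.ext <;> simp [oim, omul, oconj, o1, oI] <;> ring

end SpinorFrame

theorem stmt19_general (A1 : Matrix (Fin 2) (Fin 2) ℝ) :
    (∀ t1 t2 : ℝ,
      oim (omul (oconj (spinE1 A1 t1 t2))
        (omul (spinE2 A1 t1 t2) (omul (oconj o1) oI))) = 0) ↔
    A1 0 0 + A1 1 1 = 0 := by
  simp_rw [oim_spin_fourfold_eq_trace_smul, smul_eq_zero, div_eq_zero_iff, two_ne_zero, or_false]
  refine ⟨fun h => (h 1 0).resolve_right fun h10 => ?_, fun h _ _ => Or.inl h⟩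
  simpa using congrArg (fun x => x.2.imJ) h10

/-- the pointwise statement that the eigenbundles `V±ⱼ` of the
spinor bundle `S(ℝ³) ≅ ℝ⁷` over a surface `M² ⊂ ℝ³` are coassociative in `ℝ⁷`
iff `M²` is minimal in `ℝ³`: with `A² = 0`, the imaginary part of the four-fold
product `Ē₁(E₂(F̄₁F₂))` vanishes for all `(t₁,t₂)` iff `trace A¹ = 0`. -/
theorem stmt19 (A1 : Matrix (Fin 2) (Fin 2) ℝ) (hA1 : A1.IsSymm) :
    (∀ t1 t2 : ℝ,
      oim (omul (oconj (spinE1 A1 t1 t2))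
        (omul (spinE2 A1 t1 t2) (omul (oconj o1) oI))) = 0) ↔
    A1 0 0 + A1 1 1 = 0 :=
  stmt19_general A1
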